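/- A geodesic language on a group G with finite generating set A that has the asynchronous fellow traveller property automatically has the synchronous fellow traveller property. -/
import Mathlib


/-! Words over a finite monoid generating set of a group, word length,
directed Cayley-graph distance, paths, asynchronous fellow travelling,
and the falsification-by-fellow-traveller property. -/

variable {A G : Type*} [Group G]

/-- The value in `G` of a word over the alphabet `A`. -/
def evalWord (π : A → G) (w : List A) : G := (w.map π).prod

/-- `π : A → G` is a monoid generating set: every element is the value of a word. -/
def Generates (π : A → G) : Prop := ∀ g : G, ∃ w : List A, evalWord π w = g

/-- Word length of a group element: the least length of a word representing it. -/
noncomputable def wordLen (π : A → G) (g : G) : ℕ :=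
  sInf {n | ∃ w : List A, evalWord π w = g ∧ w.length = n}

/-- Directed Cayley graph distance. -/
noncomputable def cayleyDist (π : A → G) (g h : G) : ℕ := wordLen π (g⁻¹ * h)

/-- The path in the Cayley graph determined by a word (constant after the end). -/
def pathOf (π : A → G) (w : List A) (t : ℕ) : G := evalWord π (w.take t)

/-- A word is geodesic if its length is the word length of its value. -/
noncomputable def IsGeodesicWord (π : A → G) (w : List A) : Prop :=
  w.length = wordLen π (evalWord π w)

/-- `q` asynchronously `δ`-tracks `p`: there is a monotone proper
reparametrization `f` with `d(p t, q (f t)) ≤ δ` for all `t`. -/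
def AsyncTracks (π : A → G) (δ : ℕ) (p q : ℕ → G) : Prop :=
  ∃ f : ℕ → ℕ, Monotone f ∧ (∀ N : ℕ, ∃ t, N ≤ f t) ∧
    ∀ t, cayleyDist π (p t) (q (f t)) ≤ δ

/-- Two paths asynchronously `δ`-fellow travel. -/
def AsyncFellow (π : A → G) (δ : ℕ) (p q : ℕ → G) : Prop :=
  AsyncTracks π δ p q ∧ AsyncTracks π δ q p

/-- The falsification by fellow traveller property with constant `δ`:
every non-geodesic word is asynchronously `δ`-fellow travelled by a strictly
shorter word with the same value. -/
noncomputable def FFTP (π : A → G) (δ : ℕ) : Prop :=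
  ∀ w : List A, ¬ IsGeodesicWord π w →
    ∃ v : List A, evalWord π v = evalWord π w ∧ v.length < w.length ∧
      AsyncFellow π δ (pathOf π w) (pathOf π v)

section Aux

variable (π : A → G)

theorem evalWord_append (u v : List A) :
    evalWord π (u ++ v) = evalWord π u * evalWord π v := by
  simp [evalWord]

theorem wordLen_le_of_eval (w : List A) {g : G} (h : evalWord π w = g) :
    wordLen π g ≤ w.length :=
  Nat.sInf_le ⟨w, h, rfl⟩

theorem exists_geodesic (hgen : Generates π) (g : G) :
    ∃ w : List A, evalWord π w = g ∧ w.length = wordLen π g := by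
  have hne : {n | ∃ w : List A, evalWord π w = g ∧ w.length = n}.Nonempty := by
    obtain ⟨w, hw⟩ := hgen g; exact ⟨w.length, w, hw, rfl⟩
  exact Nat.sInf_mem hne

theorem wordLen_mul (hgen : Generates π) (g h : G) :
    wordLen π (g * h) ≤ wordLen π g + wordLen π h := by
  obtain ⟨w1, hw1, hl1⟩ := exists_geodesic π hgen g
  obtain ⟨w2, hw2, hl2⟩ := exists_geodesic π hgen h
  calc wordLen π (g * h) ≤ (w1 ++ w2).length :=
        wordLen_le_of_eval π _ (by rw [evalWord_append, hw1, hw2])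
    _ = _ := by simp [hl1, hl2]

theorem wordLen_inv (hgen : Generates π) [Fintype A] (g : G) :
    wordLen π g⁻¹ ≤ (Finset.univ.sup fun a : A => wordLen π ((π a)⁻¹)) * wordLen π g := by
  set K := Finset.univ.sup fun a : A => wordLen π ((π a)⁻¹) with hK
  suffices h : ∀ w : List A, wordLen π (evalWord π w)⁻¹ ≤ K * w.length by
    obtain ⟨w, hw, hl⟩ := exists_geodesic π hgen g
    calc wordLen π g⁻¹ = wordLen π (evalWord π w)⁻¹ := by rw [hw]
      _ ≤ K * w.length := h w
      _ = K * wordLen π g := by rw [hl]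
  intro w
  induction w with
  | nil =>
    simp only [evalWord, List.map_nil, List.prod_nil, inv_one, List.length_nil, Nat.mul_zero]
    exact wordLen_le_of_eval π [] rfl
  | cons a w ih =>
    have hstep : evalWord π (a :: w) = π a * evalWord π w := by
      simp [evalWord]
    calc wordLen π (evalWord π (a :: w))⁻¹
        = wordLen π ((evalWord π w)⁻¹ * (π a)⁻¹) := by rw [hstep, mul_inv_rev]
      _ ≤ wordLen π (evalWord π w)⁻¹ + wordLen π ((π a)⁻¹) := wordLen_mul π hgen _ _
      _ ≤ K * w.length + K := by
          have : wordLen π ((π a)⁻¹) ≤ K := by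
            exact Finset.le_sup (f := fun a : A => wordLen π ((π a)⁻¹)) (Finset.mem_univ a)
          omega
      _ = K * (a :: w).length := by simp [Nat.mul_add, Nat.mul_succ]

theorem prefix_geodesic (hgen : Generates π) {w : List A}
    (hgeo : IsGeodesicWord π w) (n : ℕ) :
    wordLen π (evalWord π (w.take n)) = (w.take n).length := by
  refine le_antisymm (wordLen_le_of_eval π _ rfl) ?_
  have hsplit : evalWord π w = evalWord π (w.take n) * evalWord π (w.drop n) := by
    rw [← evalWord_append, List.take_append_drop]
  have h1 : wordLen π (evalWord π w) ≤
      wordLen π (evalWord π (w.take n)) + (w.drop n).length := by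
    calc wordLen π (evalWord π w)
        ≤ wordLen π (evalWord π (w.take n)) + wordLen π (evalWord π (w.drop n)) := by
          rw [hsplit]; exact wordLen_mul π hgen _ _
      _ ≤ _ := by
          have := wordLen_le_of_eval π (w.drop n) (g := evalWord π (w.drop n)) rfl
          omega
  have h2 : w.length = (w.take n).length + (w.drop n).length := by
    simp only [List.length_take, List.length_drop]; omega
  rw [IsGeodesicWord] at hgeo
  omega

theorem pathOf_min (w : List A) (n : ℕ) :
    pathOf π w n = pathOf π w (min n w.length) := by
  unfold pathOf
  rcases le_total n w.length with h | h
  · rw [min_eq_left h]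
  · rw [min_eq_right h, List.take_length, List.take_of_length_le h]

theorem cayleyDist_path_le (w : List A) {m n : ℕ} (h : m ≤ n) :
    cayleyDist π (pathOf π w m) (pathOf π w n) ≤ n - m := by
  have hsplit : evalWord π (w.take n) = evalWord π (w.take m) * evalWord π ((w.take n).drop m) := by
    conv_lhs => rw [← List.take_append_drop m (w.take n)]
    rw [evalWord_append, List.take_take, min_eq_left h]
  have heq : (pathOf π w m)⁻¹ * pathOf π w n = evalWord π ((w.take n).drop m) := by
    unfold pathOf; rw [hsplit]; group
  rw [cayleyDist, heq]
  calc wordLen π _ ≤ ((w.take n).drop m).length := wordLen_le_of_eval π _ rfl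
    _ ≤ n - m := by
        simp only [List.length_drop, List.length_take]
        omega

end Aux

/-- **(Used in Theorem 5.6.)** A geodesic language with the asynchronous fellow
traveller property automatically has the synchronous fellow traveller property. -/
theorem geodesic_async_implies_sync {A G : Type*} [Fintype A] [Group G]
    (π : A → G) (hgen : Generates π) (L : Language A)
    (hgeo : ∀ w ∈ L, IsGeodesicWord π w)
    (hasync : ∃ δ : ℕ, ∀ u ∈ L, ∀ v ∈ L,
      ((∃ a : A, evalWord π v = evalWord π u * π a) ∨ evalWord π v = evalWord π u) →
      AsyncFellow π δ (pathOf π u) (pathOf π v)) :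
    ∃ δ' : ℕ, ∀ u ∈ L, ∀ v ∈ L,
      ((∃ a : A, evalWord π v = evalWord π u * π a) ∨ evalWord π v = evalWord π u) →
      ∀ t, cayleyDist π (pathOf π u t) (pathOf π v t) ≤ δ' := by
  obtain ⟨δ, h⟩ := hasync
  set K := Finset.univ.sup fun a : A => wordLen π ((π a)⁻¹) with hKdef
  refine ⟨δ + K * δ + K + 1, ?_⟩
  intro u hu v hv hrel t
  have hu_geo := hgeo u hu
  have hv_geo := hgeo v hv
  obtain ⟨⟨f, -, -, hf⟩, -⟩ := h u hu v hv hrel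
  set s := min (f t) v.length with hs
  -- the path of v at time f t equals its value at the clipped time s
  have hqs : pathOf π v (f t) = pathOf π v s := pathOf_min π v (f t)
  have hd1 : cayleyDist π (pathOf π u t) (pathOf π v s) ≤ δ := hqs ▸ hf t
  -- word lengths of path points (geodesicity of prefixes)
  have hwp : wordLen π (pathOf π u t) = min t u.length := by
    rw [pathOf, prefix_geodesic π hgen hu_geo t, List.length_take]
  have hws : wordLen π (pathOf π v s) = s := by
    rw [pathOf, prefix_geodesic π hgen hv_geo s, List.length_take]
    omega
  -- triangle inequalities in terms of wordLen
  have tri : ∀ g k : G, wordLen π k ≤ wordLen π g + cayleyDist π g k := by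
    intro g k
    have := wordLen_mul π hgen g (g⁻¹ * k)
    rwa [mul_inv_cancel_left] at this
  -- symmetrization
  have symm : ∀ g k : G, cayleyDist π k g ≤ K * cayleyDist π g k := by
    intro g k
    have : k⁻¹ * g = (g⁻¹ * k)⁻¹ := by group
    rw [cayleyDist, this]
    exact wordLen_inv π hgen _
  -- s is at most min t u.length + δ
  have h2 : s ≤ min t u.length + δ := by
    have := tri (pathOf π u t) (pathOf π v s)
    rw [hwp, hws] at this
    omega
  -- min t u.length is at most s + K * δ
  have h3 : min t u.length ≤ s + K * δ := by
    have ht := tri (pathOf π v s) (pathOf π u t)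
    rw [hwp, hws] at ht
    have hsym := symm (pathOf π u t) (pathOf π v s)
    have hmul : K * cayleyDist π (pathOf π u t) (pathOf π v s) ≤ K * δ :=
      Nat.mul_le_mul_left K hd1
    omega
  -- lengths of u and v are close
  have h4 : v.length ≤ u.length + K + 1 ∧ u.length ≤ v.length + K := by
    have hlu : u.length = wordLen π (evalWord π u) := hu_geo
    have hlv : v.length = wordLen π (evalWord π v) := hv_geo
    rcases hrel with ⟨a, ha⟩ | ha
    · have hKa : wordLen π ((π a)⁻¹) ≤ K :=
        Finset.le_sup (f := fun a : A => wordLen π ((π a)⁻¹)) (Finset.mem_univ a)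
      have ha1 : wordLen π (evalWord π v) ≤ wordLen π (evalWord π u) + 1 := by
        calc wordLen π (evalWord π v) ≤ wordLen π (evalWord π u) + wordLen π (π a) := by
              rw [ha]; exact wordLen_mul π hgen _ _
          _ ≤ wordLen π (evalWord π u) + 1 := by
              have : wordLen π (π a) ≤ 1 := wordLen_le_of_eval π [a] (by simp [evalWord])
              omega
      have ha2 : wordLen π (evalWord π u) ≤ wordLen π (evalWord π v) + K := by
        have he : evalWord π u = evalWord π v * (π a)⁻¹ := by rw [ha]; group
        calc wordLen π (evalWord π u)
            ≤ wordLen π (evalWord π v) + wordLen π ((π a)⁻¹) := by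
              rw [he]; exact wordLen_mul π hgen _ _
          _ ≤ _ := by omega
      omega
    · rw [hlu, hlv, ha]; omega
  -- finish: compare at the common time t, clipped for v
  have hqt : pathOf π v t = pathOf π v (min t v.length) := pathOf_min π v t
  set t' := min t v.length with ht'
  have htri : cayleyDist π (pathOf π u t) (pathOf π v t') ≤
      cayleyDist π (pathOf π u t) (pathOf π v s) +
        cayleyDist π (pathOf π v s) (pathOf π v t') := by
    rw [cayleyDist, cayleyDist, cayleyDist]
    have : (pathOf π u t)⁻¹ * pathOf π v t' =
        ((pathOf π u t)⁻¹ * pathOf π v s) * ((pathOf π v s)⁻¹ * pathOf π v t') := by group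
    rw [this]
    exact wordLen_mul π hgen _ _
  rw [hqt]
  rcases le_total s t' with hle | hle
  · -- s ≤ t' : go forward along v
    have hfwd : cayleyDist π (pathOf π v s) (pathOf π v t') ≤ t' - s :=
      cayleyDist_path_le π v hle
    -- t' ≤ s + K*δ + K + 1
    have : t' ≤ s + K * δ + K + 1 := by omega
    omega
  · -- t' ≤ s : go backward, paying the symmetrization constant
    have hfwd : cayleyDist π (pathOf π v t') (pathOf π v s) ≤ s - t' :=
      cayleyDist_path_le π v hle
    have hsym := symm (pathOf π v t') (pathOf π v s)
    have hst : s - t' ≤ δ := by omega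
    have hmul : K * cayleyDist π (pathOf π v t') (pathOf π v s) ≤ K * δ :=
      Nat.mul_le_mul_left K (le_trans hfwd hst)
    omega
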